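/- arXiv:1904.09481 — 3 statements merged into one kernel-verified Lean document; each statement's English description precedes it below -/
import Mathlib

section
/- If z = (a²+b²)(1+δ₁) and h = sqrt(z)·(1+δ₂) with |δ₁| ≤ 3ε/2, |δ₂| ≤ ε/2, 0 < ε ≤ 1, and a² + b² > 0, then h ≤ sqrt(a²+b²)·(1 + 5ε/4 + 3ε²/8). -/
/-! A relative error `δ` under the square root costs at most `δ / 2` after it (`√(1 + δ) ≤ 1 + δ / 2`),
so the two rounding errors combine to `(1 + 3ε/4)(1 + ε/2) = 1 + 5ε/4 + 3ε²/8`. -/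

namespace Real

theorem sqrt_mul_one_add_le_of_le {x δ t : ℝ} (hx : 0 ≤ x) (ht : -1 ≤ t) (hδ : δ ≤ t) :
    √(x * (1 + δ)) ≤ √x * (1 + t / 2) :=
  calc √(x * (1 + δ)) ≤ √(x * (1 + t)) := sqrt_le_sqrt (by gcongr)
    _ = √x * √(1 + t) := sqrt_mul hx _
    _ ≤ √x * (1 + t / 2) := mul_le_mul_of_nonneg_left (sqrt_one_add_le ht) (sqrt_nonneg x)

theorem sqrt_mul_one_add_mul_one_add_le {x δ₁ δ₂ u v : ℝ} (hx : 0 ≤ x) (hu : -1 ≤ u) (hv : -1 ≤ v)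
    (h₁ : δ₁ ≤ u) (h₂ : δ₂ ≤ v) :
    √(x * (1 + δ₁)) * (1 + δ₂) ≤ √x * (1 + u / 2) * (1 + v) :=
  calc √(x * (1 + δ₁)) * (1 + δ₂) ≤ √(x * (1 + δ₁)) * (1 + v) := by gcongr
    _ ≤ √x * (1 + u / 2) * (1 + v) :=
      mul_le_mul_of_nonneg_right (sqrt_mul_one_add_le_of_le hx hu h₁) (by linarith)

end Real

theorem rounding_error_bound_threehalves_general (a b z h δ₁ δ₂ ε : ℝ)
    (hz : z = (a ^ 2 + b ^ 2) * (1 + δ₁))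
    (hh : h = Real.sqrt z * (1 + δ₂))
    (h1 : |δ₁| ≤ 3 * ε / 2) (h2 : |δ₂| ≤ ε / 2) :
    h ≤ Real.sqrt (a ^ 2 + b ^ 2) * (1 + 5 * ε / 4 + 3 * ε ^ 2 / 8) := by
  have hε : 0 ≤ ε := by linarith [abs_nonneg δ₂]
  calc h ≤ Real.sqrt (a ^ 2 + b ^ 2) * (1 + 3 * ε / 2 / 2) * (1 + ε / 2) := by
        rw [hh, hz]
        exact Real.sqrt_mul_one_add_mul_one_add_le (by positivity) (by linarith) (by linarith)
          (le_of_abs_le h1) (le_of_abs_le h2)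
    _ = Real.sqrt (a ^ 2 + b ^ 2) * (1 + 5 * ε / 4 + 3 * ε ^ 2 / 8) := by ring

theorem rounding_error_bound_threehalves (a b z h δ₁ δ₂ ε : ℝ)
    (hz : z = (a ^ 2 + b ^ 2) * (1 + δ₁))
    (hh : h = Real.sqrt z * (1 + δ₂))
    (h1 : |δ₁| ≤ 3 * ε / 2) (h2 : |δ₂| ≤ ε / 2)
    (hε : 0 < ε) (hε1 : ε ≤ 1) (hab : 0 < a ^ 2 + b ^ 2) :
    h ≤ Real.sqrt (a ^ 2 + b ^ 2) * (1 + 5 * ε / 4 + 3 * ε ^ 2 / 8) :=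
  rounding_error_bound_threehalves_general a b z h δ₁ δ₂ ε hz hh h1 h2
end

section
/- For real h > 0 and real x with |x| < h², we have |sqrt(h² - x) - (h - x/(2h))| ≤ x²/(2h³). -/
/-! The correction `a = h - x / (2 * h)` satisfies `a ^ 2 - (h ^ 2 - x) = (x / (2 * h)) ^ 2` exactly,
so `a - √(h ^ 2 - x) = (x / (2 * h)) ^ 2 / (a + √(h ^ 2 - x))`, and `|x| < h ^ 2` keeps
`a` above `h / 2`. -/

theorem abs_sqrt_sub_le_div {y a c : ℝ} (hc : 0 < c) (hca : c ≤ a) (hy : y ≤ a ^ 2) :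
    |Real.sqrt y - a| ≤ (a ^ 2 - y) / c := by
  have hsqrt_le : Real.sqrt y ≤ a := Real.sqrt_le_iff.mpr ⟨hc.le.trans hca, hy⟩
  have hy_le_sq : y ≤ Real.sqrt y ^ 2 := by
    rcases le_total 0 y with hy0 | hy0
    · exact (Real.sq_sqrt hy0).ge
    · exact hy0.trans (sq_nonneg _)
  rw [abs_sub_comm, abs_of_nonneg (sub_nonneg.mpr hsqrt_le), le_div_iff₀ hc]
  calc (a - Real.sqrt y) * c ≤ (a - Real.sqrt y) * (a + Real.sqrt y) :=
        mul_le_mul_of_nonneg_left (by linarith [Real.sqrt_nonneg y]) (sub_nonneg.mpr hsqrt_le)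
    _ = a ^ 2 - Real.sqrt y ^ 2 := by ring
    _ ≤ a ^ 2 - y := by linarith

theorem sq_sub_div_two_mul_sub (h x : ℝ) (hh : h ≠ 0) :
    (h - x / (2 * h)) ^ 2 - (h ^ 2 - x) = (x / (2 * h)) ^ 2 := by
  field_simp
  ring

theorem maclaurin_correction_error (h x : ℝ) (hh : 0 < h) (hx : |x| < h ^ 2) :
    |Real.sqrt (h ^ 2 - x) - (h - x / (2 * h))| ≤ x ^ 2 / (2 * h ^ 3) := by
  have hcorr : h / 2 ≤ h - x / (2 * h) := by
    have : x / (2 * h) ≤ h / 2 := by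
      rw [div_le_div_iff₀ (by positivity) two_pos]
      nlinarith [(abs_lt.mp hx).2]
    linarith
  have hgap := sq_sub_div_two_mul_sub h x hh.ne'
  calc |Real.sqrt (h ^ 2 - x) - (h - x / (2 * h))|
      ≤ ((h - x / (2 * h)) ^ 2 - (h ^ 2 - x)) / (h / 2) :=
        abs_sqrt_sub_le_div (by positivity) hcorr (by linarith [sq_nonneg (x / (2 * h))])
    _ = x ^ 2 / (2 * h ^ 3) := by
        rw [hgap]
        field_simp
end

section
/- If h > 0, x = h² - s for a real s > 0, and |x| ≤ h²/2, then |(h - x/(2h)) - sqrt(s)| ≤ x²/(2 sqrt(s)³) · (1/(2(1 - |x|/h²))); in particular the corrected value h - x/(2h) approximates sqrt(s) with error O(x²). -/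
/-!
With `t = √s` we have `x = (h - t)(h + t)`, and one Newton step for `√s` started at `h` overshoots
by exactly `(h - t)² / (2h) = x² / (2h (h + t)²)`. It remains to compare denominators:
`h² - |x| ≤ 2h² - t²`, and `h³ (h + t)² - 4t³ (2h² - t²)` factors as
`(h - t)² (4t³ + 8ht² + 4h²t + h³) ≥ 0`.
-/

lemma newton_sqrt_step_sub_eq {h t : ℝ} (hh : 0 < h) (ht : 0 ≤ t) :
    h - (h ^ 2 - t ^ 2) / (2 * h) - t = (h ^ 2 - t ^ 2) ^ 2 / (2 * h * (h + t) ^ 2) := by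
  have : 0 < h + t := by positivity
  field_simp
  ring

lemma four_mul_pow_three_mul_le {h t : ℝ} (hh : 0 ≤ h) (ht : 0 ≤ t) :
    4 * t ^ 3 * (2 * h ^ 2 - t ^ 2) ≤ h ^ 3 * (h + t) ^ 2 := by
  have hfactor : h ^ 3 * (h + t) ^ 2 - 4 * t ^ 3 * (2 * h ^ 2 - t ^ 2) =
      (h - t) ^ 2 * (4 * t ^ 3 + 8 * h * t ^ 2 + 4 * h ^ 2 * t + h ^ 3) := by ring
  have : 0 ≤ (h - t) ^ 2 * (4 * t ^ 3 + 8 * h * t ^ 2 + 4 * h ^ 2 * t + h ^ 3) := by positivity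
  linarith

theorem corrected_value_error (h s x : ℝ) (hh : 0 < h) (hs : 0 < s)
    (hx : x = h ^ 2 - s) (hxb : |x| ≤ h ^ 2 / 2) :
    |(h - x / (2 * h)) - Real.sqrt s| ≤
      x ^ 2 / (2 * Real.sqrt s ^ 3) * (1 / (2 * (1 - |x| / h ^ 2))) := by
  set t := Real.sqrt s
  have ht : 0 < t := Real.sqrt_pos.mpr hs
  have hxt : x = h ^ 2 - t ^ 2 := by rw [Real.sq_sqrt hs.le]; exact hx
  have hgap : 0 < 1 - |x| / h ^ 2 := by
    rw [sub_pos, div_lt_one (by positivity)]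
    linarith [sq_pos_of_pos hh]
  have hden : 4 * t ^ 3 * (1 - |x| / h ^ 2) ≤ 2 * h * (h + t) ^ 2 := by
    have hmin : h ^ 2 - |x| ≤ 2 * h ^ 2 - t ^ 2 := by
      linarith [neg_abs_le x]
    rw [one_sub_div (by positivity), ← mul_div_assoc, div_le_iff₀ (by positivity)]
    calc 4 * t ^ 3 * (h ^ 2 - |x|) ≤ 4 * t ^ 3 * (2 * h ^ 2 - t ^ 2) := by gcongr
      _ ≤ h ^ 3 * (h + t) ^ 2 := four_mul_pow_three_mul_le hh.le ht.le
      _ ≤ 2 * h * (h + t) ^ 2 * h ^ 2 := by nlinarith [pow_pos hh 3, sq_nonneg (h + t)]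
  have hrhs : x ^ 2 / (2 * t ^ 3) * (1 / (2 * (1 - |x| / h ^ 2))) =
      x ^ 2 / (4 * t ^ 3 * (1 - |x| / h ^ 2)) := by
    rw [div_mul_div_comm, mul_one]; ring_nf
  rw [hrhs, hxt, newton_sqrt_step_sub_eq hh ht.le, abs_of_nonneg (by positivity), ← hxt]
  exact div_le_div_of_nonneg_left (sq_nonneg x) (by positivity) hden
end
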